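/- arXiv:1807.01821 — 3 statements merged into one kernel-verified Lean document; each statement's English description precedes it below -/
import Mathlib

section
/- If G is an extraspecial 2-group of order 2^{2n+1} with n ≥ 2, then T(G) is a connected strongly regular graph with parameters (2^{2n} − 1, 2^{2n−1} − 2, 2^{2n−2} − 3, 2^{2n−2} − 1). -/
/-- The commuting graph of a group `G` on a subset `X`. -/
def commGraph (G : Type*) [Group G] (X : Set G) : SimpleGraph X where
  Adj x y := x ≠ y ∧ (x : G) * y = (y : G) * x
  symm := ⟨fun x y ⟨h1, h2⟩ => ⟨h1.symm, h2.symm⟩⟩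
  loopless := ⟨fun x ⟨h, _⟩ => h rfl⟩

/-- `T` is a transversal of the center of `G`: each coset of `Z(G)` contains
exactly one element of `T`. -/
def IsCenterTransversal (G : Type*) [Group G] (T : Set G) : Prop :=
  ∀ g : G, ∃! t, t ∈ T ∧ g⁻¹ * t ∈ Subgroup.center G

/-- The graph `T(G)`: the commuting graph of `G` on `T \ Z(G)`. -/
def TGraph (G : Type*) [Group G] (T : Set G) :
    SimpleGraph ↥(T \ (Subgroup.center G : Set G)) :=
  commGraph G (T \ (Subgroup.center G : Set G))

/-- Strongly regular graph with parameters `(v, k, l, m)` (with `0 < k < v - 1`). -/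
def IsSRG {V : Type*} (G : SimpleGraph V) (v k l m : ℕ) : Prop :=
  Nat.card V = v ∧ 0 < k ∧ k + 1 < v ∧
    (∀ x, (G.neighborSet x).ncard = k) ∧
    (∀ x y, G.Adj x y → (G.neighborSet x ∩ G.neighborSet y).ncard = l) ∧
    (∀ x y, x ≠ y → ¬ G.Adj x y → (G.neighborSet x ∩ G.neighborSet y).ncard = m)

/-- The disjoint union of `m` copies of the complete graph `K_n`. -/
def mKn (m n : ℕ) : SimpleGraph (Fin m × Fin n) where
  Adj x y := x ≠ y ∧ x.1 = y.1
  symm := ⟨fun x y ⟨h1, h2⟩ => ⟨h1.symm, h2.symm⟩⟩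
  loopless := ⟨fun x ⟨h, _⟩ => h rfl⟩

open scoped commutatorElement

theorem commutator_mem_commutatorSubgroup {G : Type*} [Group G] (x y : G) :
    ⁅x, y⁆ ∈ commutator G := by
  rw [commutator_def]
  exact Subgroup.commutator_mem_commutator (Subgroup.mem_top x) (Subgroup.mem_top y)

/-- Isoclinism of groups. -/
def Isoclinic (G H : Type*) [Group G] [Group H] : Prop :=
  ∃ (φ : G ⧸ Subgroup.center G ≃* H ⧸ Subgroup.center H)
    (ψ : commutator G ≃* commutator H),
    ∀ (x y : G) (x' y' : H),
      φ (QuotientGroup.mk x) = QuotientGroup.mk x' →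
      φ (QuotientGroup.mk y) = QuotientGroup.mk y' →
      (ψ ⟨⁅x, y⁆, commutator_mem_commutatorSubgroup x y⟩ : H) = ⁅x', y'⁆

/-- An extraspecial `p`-group: `G' = Z(G) = Φ(G)` and `|Z(G)| = p`. -/
def IsExtraspecial (p : ℕ) (G : Type*) [Group G] : Prop :=
  IsPGroup p G ∧ commutator G = Subgroup.center G ∧
    frattini G = Subgroup.center G ∧ Nat.card (Subgroup.center G) = p

open Pointwise Subgroup

/-!
Because `G' = Z(G)` has order two, `x ↦ ⁅x, g⁆` is a homomorphism `G → Z(G)` with kernel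
`C_G(g)`, so every noncentral `g` has a centralizer of index `2`. If `g⁻¹ h` is not central,
the centralizers of `g` and `h` differ (equal centralizers would force `⁅x, g⁆ = ⁅x, h⁆` for
all `x`, making `g⁻¹ h` central), so their intersection has index `4`. A transversal meets a
subgroup `C ≥ Z(G)` in `|C| / 2` elements, exactly one of them central; applied to `G`, to
`C_G(x)` and to `C_G(x) ∩ C_G(y)` this counts the vertices, the neighbours and the common
neighbours. Since `μ > 0`, any two vertices are at distance at most two.
-/

theorem eq_of_eq_one_iff_of_card_eq_two {M : Type*} [One M] (hM : Nat.card M = 2) {a b : M}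
    (hab : a = 1 ↔ b = 1) : a = b := by
  by_cases ha : a = 1
  · rw [ha, hab.mp ha]
  obtain ⟨c, -, hc⟩ := (Nat.card_eq_two_iff' (1 : M)).mp hM
  exact (hc a ha).trans (hc b (mt hab.mpr ha)).symm

section CentralCommutators

variable {G : Type*} [Group G]

theorem Subgroup.index_inf_of_not_le {H K : Subgroup G} [K.Normal] (hK : K.index.Prime)
    (hHK : ¬ H ≤ K) : (H ⊓ K).index = K.index * H.index := by
  rw [← relIndex_mul_index inf_le_left, inf_relIndex_left]
  congr 1
  exact ((Nat.dvd_prime hK).mp (relIndex_dvd_index_of_normal K H)).resolve_left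
    (mt relIndex_eq_one.mp hHK)

def commutatorHom (hcomm : ∀ a b : G, ⁅a, b⁆ ∈ center G) (g : G) : G →* center G where
  toFun x := ⟨⁅x, g⁆, hcomm x g⟩
  map_one' := Subtype.ext (commutatorElement_one_left g)
  map_mul' a b := Subtype.ext <| by
    have hb := Subgroup.mem_center_iff.mp (hcomm b g)
    calc ⁅a * b, g⁆ = a * ⁅b, g⁆ * (g * a⁻¹ * g⁻¹) := by
          simp only [commutatorElement_def]; group
      _ = ⁅b, g⁆ * ⁅a, g⁆ := by rw [hb a, commutatorElement_def a g]; group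
      _ = ⁅a, g⁆ * ⁅b, g⁆ := (hb _).symm

theorem ker_commutatorHom (hcomm : ∀ a b : G, ⁅a, b⁆ ∈ center G) (g : G) :
    (commutatorHom hcomm g).ker = centralizer {g} := by
  ext x
  rw [MonoidHom.mem_ker, mem_centralizer_singleton_iff, ← commutatorElement_eq_one_iff_mul_comm,
    ← Subtype.val_inj]
  rfl

theorem index_centralizer_eq_card_center (hcomm : ∀ a b : G, ⁅a, b⁆ ∈ center G)
    (hp : (Nat.card (center G)).Prime) {g : G} (hg : g ∉ center G) :
    (centralizer {g}).index = Nat.card (center G) := by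
  have hdvd : (centralizer {g}).index ∣ Nat.card (center G) := by
    rw [← ker_commutatorHom hcomm, index_ker]
    exact card_subgroup_dvd_card _
  have hne : (centralizer {g}).index ≠ 1 := by
    rwa [Ne, index_eq_one, centralizer_eq_top_iff_subset, Set.singleton_subset_iff]
  exact ((Nat.dvd_prime hp).mp hdvd).resolve_left hne

theorem inv_mul_mem_center_of_centralizer_eq (hcomm : ∀ a b : G, ⁅a, b⁆ ∈ center G)
    (hZ : Nat.card (center G) = 2) {g h : G} (hgh : centralizer {g} = centralizer {h}) :
    g⁻¹ * h ∈ center G := by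
  refine Subgroup.mem_center_iff.mpr fun x => ?_
  have hx : commutatorHom hcomm x g = commutatorHom hcomm x h := by
    refine eq_of_eq_one_iff_of_card_eq_two hZ ?_
    rw [← MonoidHom.mem_ker, ← MonoidHom.mem_ker, ker_commutatorHom, mem_centralizer_singleton_iff,
      mem_centralizer_singleton_iff, eq_comm, ← mem_centralizer_singleton_iff,
      eq_comm (a := h * x), ← mem_centralizer_singleton_iff, hgh]
  have hgh_comm : commutatorHom hcomm x (g⁻¹ * h) = 1 := by
    rw [map_mul, map_inv, hx, inv_mul_cancel]
  exact (commutatorElement_eq_one_iff_mul_comm.mp (congrArg Subtype.val hgh_comm)).symm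

theorem index_centralizer_inf_centralizer (hcomm : ∀ a b : G, ⁅a, b⁆ ∈ center G)
    (hZ : Nat.card (center G) = 2) {g h : G} (hg : g ∉ center G) (hh : h ∉ center G)
    (hgh : g⁻¹ * h ∉ center G) : (centralizer {g} ⊓ centralizer {h}).index = 4 := by
  have hp : (Nat.card (center G)).Prime := hZ ▸ Nat.prime_two
  have hg2 := index_centralizer_eq_card_center hcomm hp hg
  have hh2 := index_centralizer_eq_card_center hcomm hp hh
  rw [hZ] at hg2 hh2
  have := normal_of_index_eq_two hh2
  have hle : ¬ centralizer {g} ≤ centralizer {h} := fun hle => by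
    refine hgh (inv_mul_mem_center_of_centralizer_eq hcomm hZ (le_antisymm hle ?_))
    have := relIndex_mul_index hle
    rw [hg2, hh2] at this
    exact relIndex_eq_one.mp (by omega)
  rw [index_inf_of_not_le (hh2 ▸ Nat.prime_two) hle, hg2, hh2]

end CentralCommutators

section Transversal

variable {G : Type*} [Group G] {T : Set G}

theorem IsCenterTransversal.isComplement (hT : IsCenterTransversal G T) :
    IsComplement T (center G) := by
  refine isComplement_iff_existsUnique_inv_mul_mem.mpr fun g => ?_
  obtain ⟨t, ⟨htT, htg⟩, huniq⟩ := hT g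
  exact ⟨⟨t, htT⟩, by simpa using inv_mem htg,
    fun s hs => Subtype.ext (huniq s ⟨s.2, by simpa using inv_mem hs⟩)⟩

theorem IsCenterTransversal.inv_mul_notMem_center (hT : IsCenterTransversal G T) {x y : G}
    (hx : x ∈ T) (hy : y ∈ T) (hxy : x ≠ y) : x⁻¹ * y ∉ center G := fun h =>
  hxy ((hT x).unique ⟨hx, by simp⟩ ⟨hy, h⟩)

theorem IsCenterTransversal.ncard_inter_center (hT : IsCenterTransversal G T) :
    (T ∩ center G).ncard = 1 := by
  obtain ⟨z, hz, huniq⟩ := hT 1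
  exact Set.ncard_eq_one.mpr ⟨z, Set.eq_singleton_iff_unique_mem.mpr
    ⟨by simpa using hz, fun t ht => huniq t (by simpa using ht)⟩⟩

theorem Subgroup.IsComplement.card_inter_mul_card {S : Set G} {H K : Subgroup G}
    (h : IsComplement S H) (hHK : H ≤ K) :
    Nat.card ↥((K : Set G) ∩ S) * Nat.card H = Nat.card K := by
  rw [← Nat.card_prod]
  refine Nat.card_congr (Equiv.ofBijective
    (fun p => ⟨p.1.1 * p.2.1, mul_mem p.1.2.1 (hHK p.2.2)⟩) ⟨?_, ?_⟩)
  · intro p q hpq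
    have := h.1 (a₁ := (⟨p.1, p.1.2.2⟩, p.2)) (a₂ := (⟨q.1, q.1.2.2⟩, q.2))
      (congrArg Subtype.val hpq)
    simp only [Prod.mk.injEq, Subtype.mk.injEq] at this
    exact Prod.ext (Subtype.ext this.1) this.2
  · rintro ⟨k, hk⟩
    obtain ⟨⟨⟨s, hs⟩, ⟨a, ha⟩⟩, hsa⟩ := h.2 k
    have hsK : s ∈ K := by
      simpa [← hsa] using mul_mem hk (inv_mem (hHK ha))
    exact ⟨(⟨s, hsK, hs⟩, ⟨a, ha⟩), Subtype.ext hsa⟩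

theorem IsCenterTransversal.ncard_inter_diff_center_mul_index [Finite G]
    (hT : IsCenterTransversal G T) {C : Subgroup G} (hC : center G ≤ C) :
    (((C : Set G) ∩ (T \ center G)).ncard + 1) * Nat.card (center G) * C.index =
      Nat.card G := by
  have hCT : ((C : Set G) ∩ T) ∩ center G = T ∩ center G := by
    rw [Set.inter_assoc, Set.inter_comm T, ← Set.inter_assoc,
      Set.inter_eq_right.mpr (hC : (center G : Set G) ⊆ C), Set.inter_comm]
  have hsplit := Set.ncard_inter_add_ncard_sdiff_eq_ncard ((C : Set G) ∩ T) (center G)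
  rw [hCT, hT.ncard_inter_center] at hsplit
  rw [← Set.inter_sdiff_assoc, ← card_mul_index C, ← hT.isComplement.card_inter_mul_card hC,
    Nat.card_coe_set_eq, ← hsplit, add_comm]

end Transversal

section CommGraph

variable {G : Type*} [Group G] (X : Set G)

theorem image_neighborSet_commGraph (x : X) :
    Subtype.val '' (commGraph G X).neighborSet x =
      ((centralizer {(x : G)} : Set G) ∩ X) \ {(x : G)} := by
  ext g
  simp only [Set.mem_image, SimpleGraph.mem_neighborSet, commGraph, Set.mem_sdiff,
    Set.mem_inter_iff, SetLike.mem_coe, mem_centralizer_singleton_iff, Set.mem_singleton_iff]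
  constructor
  · rintro ⟨y, ⟨hxy, hcomm⟩, rfl⟩
    exact ⟨⟨hcomm.symm, y.2⟩, fun h => hxy (Subtype.ext h.symm)⟩
  · rintro ⟨⟨hcomm, hg⟩, hgx⟩
    exact ⟨⟨g, hg⟩, ⟨fun h => hgx (congrArg Subtype.val h).symm, hcomm.symm⟩, rfl⟩

theorem image_commonNeighbors_commGraph (x y : X) :
    Subtype.val '' ((commGraph G X).neighborSet x ∩ (commGraph G X).neighborSet y) =
      (((centralizer {(x : G)} ⊓ centralizer {(y : G)} : Subgroup G) : Set G) ∩ X) \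
        {(x : G), (y : G)} := by
  rw [Set.image_inter Subtype.val_injective, image_neighborSet_commGraph,
    image_neighborSet_commGraph]
  ext g
  simp only [Set.mem_sdiff, Set.mem_inter_iff, Set.mem_insert_iff, Set.mem_singleton_iff,
    SetLike.mem_coe, Subgroup.mem_inf]
  tauto

theorem ncard_commonNeighbors_commGraph_of_not_adj {x y : X} (hne : x ≠ y)
    (hxy : ¬ (commGraph G X).Adj x y) :
    ((commGraph G X).neighborSet x ∩ (commGraph G X).neighborSet y).ncard =
      (((centralizer {(x : G)} ⊓ centralizer {(y : G)} : Subgroup G) : Set G) ∩ X).ncard := by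
  have hcomm : ¬ (x : G) * y = y * x := fun h => hxy ⟨hne, h⟩
  rw [← Set.ncard_image_of_injective _ Subtype.val_injective, image_commonNeighbors_commGraph,
    sdiff_eq_left.mpr]
  rw [Set.disjoint_left]
  rintro g ⟨hgC, -⟩ hg
  rw [SetLike.mem_coe, Subgroup.mem_inf, mem_centralizer_singleton_iff,
    mem_centralizer_singleton_iff] at hgC
  rcases hg with rfl | rfl
  · exact hcomm hgC.2
  · exact hcomm hgC.1.symm

variable [Finite G]

theorem ncard_neighborSet_commGraph (x : X) :
    ((commGraph G X).neighborSet x).ncard + 1 = ((centralizer {(x : G)} : Set G) ∩ X).ncard := by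
  rw [← Set.ncard_image_of_injective _ Subtype.val_injective, image_neighborSet_commGraph]
  exact Set.ncard_sdiff_singleton_add_one ⟨mem_centralizer_singleton_iff.mpr rfl, x.2⟩

theorem ncard_commonNeighbors_commGraph_of_adj {x y : X} (hxy : (commGraph G X).Adj x y) :
    ((commGraph G X).neighborSet x ∩ (commGraph G X).neighborSet y).ncard + 2 =
      (((centralizer {(x : G)} ⊓ centralizer {(y : G)} : Subgroup G) : Set G) ∩ X).ncard := by
  obtain ⟨hne, hcomm⟩ := hxy
  have hpair : {(x : G), (y : G)} ⊆
      ((centralizer {(x : G)} ⊓ centralizer {(y : G)} : Subgroup G) : Set G) ∩ X := by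
    rintro g (rfl | rfl)
    · exact ⟨⟨mem_centralizer_singleton_iff.mpr rfl, mem_centralizer_singleton_iff.mpr hcomm⟩,
        x.2⟩
    · exact ⟨⟨mem_centralizer_singleton_iff.mpr hcomm.symm, mem_centralizer_singleton_iff.mpr rfl⟩,
        y.2⟩
  rw [← Set.ncard_image_of_injective _ Subtype.val_injective, image_commonNeighbors_commGraph,
    ← Set.ncard_pair (Subtype.val_injective.ne hne), Set.ncard_sdiff_add_ncard_of_subset hpair]

end CommGraph

theorem IsSRG.connected {V : Type*} {Γ : SimpleGraph V} {v k l m : ℕ} (h : IsSRG Γ v k l m)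
    (hm : 0 < m) : Γ.Connected := by
  obtain ⟨hv, -, hkv, -, -, hμ⟩ := h
  rw [SimpleGraph.connected_iff]
  refine ⟨fun x y => ?_, (Nat.card_pos_iff.mp (by omega)).1⟩
  by_cases hxy : x = y
  · exact hxy ▸ .refl x
  by_cases hadj : Γ.Adj x y
  · exact hadj.reachable
  obtain ⟨z, hxz, hyz⟩ := Set.nonempty_of_ncard_ne_zero (by rw [hμ x y hxy hadj]; omega)
  exact (SimpleGraph.Adj.reachable hxz).trans (SimpleGraph.Adj.reachable hyz).symm

section TGraph

variable {G : Type*} [Group G] [Finite G] {T : Set G}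

theorem TGraph.card_vertices (hZ : Nat.card (center G) = 2) (hT : IsCenterTransversal G T) :
    (Nat.card ↥(T \ (center G : Set G)) + 1) * 2 = Nat.card G := by
  have := hT.ncard_inter_diff_center_mul_index le_top
  rwa [coe_top, Set.univ_inter, index_top, mul_one, hZ, ← Nat.card_coe_set_eq] at this

theorem TGraph.ncard_neighborSet (hcomm : ∀ a b : G, ⁅a, b⁆ ∈ center G)
    (hZ : Nat.card (center G) = 2) (hT : IsCenterTransversal G T) (x : ↥(T \ (center G : Set G))) :
    (((TGraph G T).neighborSet x).ncard + 2) * 4 = Nat.card G := by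
  have hC := hT.ncard_inter_diff_center_mul_index (center_le_centralizer {(x : G)})
  rw [index_centralizer_eq_card_center hcomm (hZ ▸ Nat.prime_two) x.2.2, hZ] at hC
  have := ncard_neighborSet_commGraph _ x
  unfold TGraph
  omega

theorem TGraph.ncard_inter_centralizer_inf (hcomm : ∀ a b : G, ⁅a, b⁆ ∈ center G)
    (hZ : Nat.card (center G) = 2) (hT : IsCenterTransversal G T)
    {x y : ↥(T \ (center G : Set G))} (hxy : x ≠ y) :
    ((((centralizer {(x : G)} ⊓ centralizer {(y : G)} : Subgroup G) : Set G) ∩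
      (T \ center G)).ncard + 1) * 8 = Nat.card G := by
  have hC := hT.ncard_inter_diff_center_mul_index
    (le_inf (center_le_centralizer {(x : G)}) (center_le_centralizer {(y : G)}))
  rwa [index_centralizer_inf_centralizer hcomm hZ x.2.2 y.2.2
    (hT.inv_mul_notMem_center x.2.1 y.2.1 (Subtype.val_injective.ne hxy)), hZ, mul_assoc] at hC

theorem TGraph.ncard_commonNeighbors_of_adj (hcomm : ∀ a b : G, ⁅a, b⁆ ∈ center G)
    (hZ : Nat.card (center G) = 2) (hT : IsCenterTransversal G T)
    {x y : ↥(T \ (center G : Set G))} (hxy : (TGraph G T).Adj x y) :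
    (((TGraph G T).neighborSet x ∩ (TGraph G T).neighborSet y).ncard + 3) * 8 = Nat.card G := by
  have := TGraph.ncard_inter_centralizer_inf hcomm hZ hT hxy.1
  have := ncard_commonNeighbors_commGraph_of_adj _ hxy
  unfold TGraph
  omega

theorem TGraph.ncard_commonNeighbors_of_not_adj (hcomm : ∀ a b : G, ⁅a, b⁆ ∈ center G)
    (hZ : Nat.card (center G) = 2) (hT : IsCenterTransversal G T)
    {x y : ↥(T \ (center G : Set G))} (hne : x ≠ y) (hxy : ¬ (TGraph G T).Adj x y) :
    (((TGraph G T).neighborSet x ∩ (TGraph G T).neighborSet y).ncard + 1) * 8 = Nat.card G := by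
  have := TGraph.ncard_inter_centralizer_inf hcomm hZ hT hne
  rwa [← ncard_commonNeighbors_commGraph_of_not_adj _ hne hxy] at this

end TGraph

theorem stmt8 (G : Type*) [Group G] [Finite G] (n : ℕ) (hn : 2 ≤ n)
    (hG : IsExtraspecial 2 G) (hcard : Nat.card G = 2 ^ (2 * n + 1))
    (T : Set G) (hT : IsCenterTransversal G T) :
    (TGraph G T).Connected ∧
      IsSRG (TGraph G T) (2 ^ (2 * n) - 1) (2 ^ (2 * n - 1) - 2)
        (2 ^ (2 * n - 2) - 3) (2 ^ (2 * n - 2) - 1) := by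
  obtain ⟨-, hcomm, -, hZ⟩ := hG
  have hcentral : ∀ a b : G, ⁅a, b⁆ ∈ center G :=
    fun a b => hcomm ▸ commutator_mem_commutatorSubgroup a b
  obtain ⟨m, rfl⟩ : ∃ m, n = m + 2 := ⟨n - 2, by omega⟩
  rw [show 2 * (m + 2) - 1 = 2 * m + 3 by omega, show 2 * (m + 2) - 2 = 2 * m + 2 by omega,
    show 2 ^ (2 * (m + 2)) = 4 * 2 ^ (2 * m + 2) by ring,
    show 2 ^ (2 * m + 3) = 2 * 2 ^ (2 * m + 2) by ring]
  rw [show 2 ^ (2 * (m + 2) + 1) = 8 * 2 ^ (2 * m + 2) by ring] at hcard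
  have hN : 4 ≤ 2 ^ (2 * m + 2) := by
    rw [pow_add]; exact le_mul_of_one_le_left' Nat.one_le_two_pow
  generalize 2 ^ (2 * m + 2) = N at *
  have hsrg : IsSRG (TGraph G T) (4 * N - 1) (2 * N - 2) (N - 3) (N - 1) := by
    refine ⟨?_, by omega, by omega, fun x => ?_, fun x y hxy => ?_, fun x y hne hxy => ?_⟩
    · have := TGraph.card_vertices hZ hT; omega
    · have := TGraph.ncard_neighborSet hcentral hZ hT x; omega
    · have := TGraph.ncard_commonNeighbors_of_adj hcentral hZ hT hxy; omega
    · have := TGraph.ncard_commonNeighbors_of_not_adj hcentral hZ hT hne hxy; omega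
  exact ⟨hsrg.connected (by omega), hsrg⟩
end

section
/- Let G be a finite non-abelian group. Then T(G) is disconnected strongly regular if and only if the centralizer of every non-central element of G is abelian and there exists an integer r ≥ 3 with [C_G(x) : Z(G)] = r for all non-central x ∈ G. -/
open scoped commutatorElement

open Pointwise Subgroup

/-!
Write `V = T \ Z(G)`. Since `T ∩ C_G(x)` is a transversal of `Z(G)` in `C_G(x)` and contains exactly
one central element, a vertex `x` of `T(G)` has degree `[C_G(x) : Z(G)] - 2`. Commuting depends only
on cosets of `Z(G)`, so all centralizers of non-central elements are abelian exactly when `T(G)` is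
a disjoint union of cliques. Such a graph, when regular and not complete, is a disconnected strongly
regular graph with `μ = 0`; conversely, two vertices in different components of a strongly regular
graph have no common neighbour, so `μ = 0`, which forces adjacency to be transitive.
-/

namespace SimpleGraph

variable {V : Type*} (Γ : SimpleGraph V)

lemma eq_or_adj_of_reachable
    (htrans : ∀ {a b c}, Γ.Adj a b → Γ.Adj b c → a ≠ c → Γ.Adj a c)
    {u w : V} (h : Γ.Reachable u w) : u = w ∨ Γ.Adj u w := by
  obtain ⟨p⟩ := h
  induction p with
  | nil => exact .inl rfl
  | @cons u v w huv _ ih =>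
    rcases ih with rfl | hvw
    · exact .inr huv
    · by_cases huw : u = w
      · exact .inl huw
      · exact .inr (htrans huv hvw huw)

lemma inter_neighborSet_eq_empty_of_not_reachable {u w : V} (h : ¬ Γ.Reachable u w) :
    Γ.neighborSet u ∩ Γ.neighborSet w = ∅ :=
  Set.eq_empty_of_forall_notMem fun _ ⟨hu, hw⟩ => h (hu.reachable.trans hw.symm.reachable)

lemma ncard_inter_neighborSet_add_one_of_adj [Finite V]
    (htrans : ∀ {a b c}, Γ.Adj a b → Γ.Adj b c → a ≠ c → Γ.Adj a c)
    {p q : V} (hpq : Γ.Adj p q) :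
    (Γ.neighborSet p ∩ Γ.neighborSet q).ncard + 1 = (Γ.neighborSet p).ncard := by
  have hcommon : Γ.neighborSet p ∩ Γ.neighborSet q = Γ.neighborSet p \ {q} := by
    ext z
    refine ⟨fun ⟨hpz, hqz⟩ => ⟨hpz, fun hzq => Γ.loopless.irrefl q (hzq ▸ hqz)⟩,
      fun ⟨hpz, hzq⟩ => ⟨hpz, htrans hpq.symm hpz (Ne.symm hzq)⟩⟩
  rw [hcommon]
  exact Set.ncard_sdiff_singleton_add_one (show q ∈ Γ.neighborSet p from hpq)

/-- `htrans` says that `Γ` is a disjoint union of cliques, and `p`, `q` that it is not complete. -/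
lemma isSRG_and_not_connected_of_adj_trans [Finite V]
    (htrans : ∀ {a b c}, Γ.Adj a b → Γ.Adj b c → a ≠ c → Γ.Adj a c)
    {k : ℕ} (hk : 0 < k) (hreg : ∀ v, (Γ.neighborSet v).ncard = k)
    {p q : V} (hpq : p ≠ q) (hnadj : ¬ Γ.Adj p q) :
    IsSRG Γ (Nat.card V) k (k - 1) 0 ∧ ¬ Γ.Connected := by
  have hcard : k + 1 < Nat.card V := by
    have hq : q ∉ insert p (Γ.neighborSet p) := by
      rintro (h | h)
      exacts [hpq h.symm, hnadj h]
    have hlt := Set.ncard_lt_ncard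
      (Set.ssubset_univ_iff.mpr (Set.ne_univ_iff_exists_notMem _ |>.mpr ⟨q, hq⟩))
    rwa [Set.ncard_univ, Set.ncard_insert_of_notMem Γ.notMem_neighborSet_self, hreg] at hlt
  refine ⟨⟨rfl, hk, hcard, hreg, fun a b hab => ?_, fun a c hac hnac => ?_⟩, fun h => ?_⟩
  · have := Γ.ncard_inter_neighborSet_add_one_of_adj htrans hab
    have := hreg a
    omega
  · refine (Set.ncard_eq_zero).mpr (Set.eq_empty_of_forall_notMem fun b ⟨hab, hcb⟩ => hnac ?_)
    exact htrans hab ((Γ.mem_neighborSet c b).mp hcb).symm hac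
  · exact (Γ.eq_or_adj_of_reachable htrans (h.preconnected p q)).elim hpq hnadj

end SimpleGraph

/-- Vertices in different components have no common neighbour, so `μ = 0`. -/
lemma IsSRG.adj_trans_of_not_connected {V : Type*} {Γ : SimpleGraph V} {v k l m : ℕ}
    (hsrg : IsSRG Γ v k l m) (hconn : ¬ Γ.Connected) {a b c : V}
    (hab : Γ.Adj a b) (hbc : Γ.Adj b c) (hac : a ≠ c) : Γ.Adj a c := by
  obtain ⟨hv, -, hkv, -, -, hμ⟩ := hsrg
  obtain ⟨hne, hfin⟩ := Nat.card_pos_iff.mp (show 0 < Nat.card V by omega)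
  obtain ⟨u, w, huw⟩ : ∃ u w, ¬ Γ.Reachable u w := by
    simpa [SimpleGraph.connected_iff, SimpleGraph.Preconnected, hne] using hconn
  have hm : m = 0 := by
    rw [← hμ u w (fun h => huw (h ▸ .rfl)) (fun h => huw h.reachable),
      Γ.inter_neighborSet_eq_empty_of_not_reachable huw, Set.ncard_empty]
  by_contra hnac
  have hempty := (Set.ncard_eq_zero).mp ((hμ a c hac hnac).trans hm)
  exact hempty.subset ⟨hab, hbc.symm⟩

namespace IsCenterTransversal

variable {G : Type*} [Group G] {T : Set G} (hT : IsCenterTransversal G T)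

noncomputable def rep (g : G) : G := (hT g).choose

lemma rep_mem (g : G) : hT.rep g ∈ T := (hT g).choose_spec.1.1

lemma inv_mul_rep_mem_center (g : G) : g⁻¹ * hT.rep g ∈ center G := (hT g).choose_spec.1.2

include hT in
lemma eq_of_inv_mul_mem_center {t t' : G} (ht : t ∈ T) (ht' : t' ∈ T)
    (h : t⁻¹ * t' ∈ center G) : t = t' :=
  (hT t).unique ⟨ht, by simp [one_mem]⟩ ⟨ht', h⟩

lemma commute_rep_left_iff (g c : G) : Commute (hT.rep g) c ↔ Commute g c := by
  have hz : Commute (g⁻¹ * hT.rep g) c := (mem_center_iff.mp (hT.inv_mul_rep_mem_center g) c).symm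
  have hrep : hT.rep g = g * (g⁻¹ * hT.rep g) := by group
  refine ⟨fun h => ?_, fun h => hrep ▸ h.mul_left hz⟩
  rw [show g = hT.rep g * (g⁻¹ * hT.rep g)⁻¹ by group]
  exact h.mul_left hz.inv_left

lemma commute_rep_right_iff (c g : G) : Commute c (hT.rep g) ↔ Commute c g := by
  rw [Commute.symm_iff, hT.commute_rep_left_iff, Commute.symm_iff]

lemma commute_rep_rep_iff (g h : G) : Commute (hT.rep g) (hT.rep h) ↔ Commute g h := by
  rw [hT.commute_rep_left_iff, hT.commute_rep_right_iff]

lemma centralizer_rep (g : G) : centralizer {hT.rep g} = centralizer ({g} : Set G) := by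
  ext c
  simp only [mem_centralizer_singleton_iff]
  exact hT.commute_rep_right_iff c g

lemma rep_mem_diff_center {g : G} (hg : g ∉ center G) : hT.rep g ∈ T \ (center G : Set G) := by
  refine ⟨hT.rep_mem g, fun hrep => hg (mem_center_iff.mpr fun c => ?_)⟩
  exact (hT.commute_rep_right_iff c g).mp (mem_center_iff.mp hrep c)

include hT in
/-- `T ∩ K` is a transversal of `Z(G)` in `K`. -/
lemma ncard_inter_eq_relIndex {K : Subgroup G} (hK : center G ≤ K) :
    (T ∩ (K : Set G)).ncard = (center G).relIndex K := by
  rw [← Nat.card_coe_set_eq]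
  refine Nat.card_eq_of_bijective (fun t : ↥(T ∩ (K : Set G)) =>
    (QuotientGroup.mk ⟨t, t.2.2⟩ : K ⧸ (center G).subgroupOf K)) ⟨?_, fun q => ?_⟩
  · rintro ⟨t, htT, _⟩ ⟨t', ht'T, _⟩ h
    exact Subtype.ext <| hT.eq_of_inv_mul_mem_center htT ht'T <|
      mem_subgroupOf.mp (QuotientGroup.eq.mp h)
  · induction q using QuotientGroup.induction_on with | H k => ?_
    have hrepK : hT.rep k ∈ K := by
      rw [show hT.rep k = k * ((k : G)⁻¹ * hT.rep k) by group]
      exact mul_mem k.2 (hK (hT.inv_mul_rep_mem_center k))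
    refine ⟨⟨hT.rep k, hT.rep_mem k, hrepK⟩, QuotientGroup.eq.mpr (mem_subgroupOf.mpr ?_)⟩
    simpa using inv_mem (hT.inv_mul_rep_mem_center k)

end IsCenterTransversal

section TGraph

variable {G : Type*} [Group G] {T : Set G}

lemma ncard_neighborSet_tGraph_add_two [Finite G] (hT : IsCenterTransversal G T)
    (v : ↥(T \ (center G : Set G))) :
    ((TGraph G T).neighborSet v).ncard + 2 = (center G).relIndex (centralizer {(v : G)}) := by
  set C := centralizer {(v : G)}
  have hZC : center G ≤ C := center_le_centralizer _
  have hsplit : T ∩ (C : Set G) =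
      (T ∩ (center G : Set G)) ∪ Subtype.val '' insert v ((TGraph G T).neighborSet v) := by
    ext g
    constructor
    · rintro ⟨hgT, hgC⟩
      by_cases hgZ : g ∈ center G
      · exact .inl ⟨hgT, hgZ⟩
      refine .inr ⟨⟨g, hgT, hgZ⟩, ?_, rfl⟩
      by_cases hgv : g = v
      · exact .inl (Subtype.ext hgv)
      · exact .inr ⟨fun h => hgv (congrArg Subtype.val h).symm,
          (mem_centralizer_singleton_iff.mp hgC).symm⟩
    · rintro (⟨hgT, hgZ⟩ | ⟨w, hw, rfl⟩)
      · exact ⟨hgT, hZC hgZ⟩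
      refine ⟨w.2.1, mem_centralizer_singleton_iff.mpr ?_⟩
      rcases hw with rfl | hadj
      exacts [rfl, hadj.2.symm]
  have hdisj : Disjoint (T ∩ (center G : Set G))
      (Subtype.val '' insert v ((TGraph G T).neighborSet v)) :=
    Set.disjoint_left.mpr fun _ ⟨_, hgZ⟩ ⟨w, _, hwg⟩ => w.2.2 (hwg ▸ hgZ)
  rw [← hT.ncard_inter_eq_relIndex hZC, hsplit, Set.ncard_union_eq hdisj,
    hT.ncard_inter_eq_relIndex le_rfl, relIndex_self,
    Set.ncard_image_of_injective _ Subtype.val_injective,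
    Set.ncard_insert_of_notMem (TGraph G T).notMem_neighborSet_self]
  omega

lemma forall_isMulCommutative_centralizer_iff_tGraph_adj_trans (hT : IsCenterTransversal G T) :
    (∀ x : G, x ∉ center G → IsMulCommutative (centralizer {x})) ↔
      ∀ {a b c : ↥(T \ (center G : Set G))}, (TGraph G T).Adj a b → (TGraph G T).Adj b c →
        a ≠ c → (TGraph G T).Adj a c := by
  constructor
  · intro hC a b c hab hbc hac
    have := hC b b.2.2
    exact ⟨hac, setLike_mul_comm (mem_centralizer_singleton_iff.mpr hab.2)
      (mem_centralizer_singleton_iff.mpr hbc.2.symm)⟩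
  · intro htrans x hx
    have hcomm : ∀ a b c : ↥(T \ (center G : Set G)),
        Commute (a : G) b → Commute (b : G) c → Commute (a : G) c := by
      intro a b c hab hbc
      by_cases hab' : a = b
      · exact hab' ▸ hbc
      by_cases hbc' : b = c
      · exact hbc' ▸ hab
      by_cases hac' : a = c
      · exact hac' ▸ Commute.refl _
      exact (htrans ⟨hab', hab⟩ ⟨hbc', hbc⟩ hac').2
    refine ⟨⟨fun p q => Subtype.ext ?_⟩⟩
    by_cases hp : (p : G) ∈ center G
    · exact (mem_center_iff.mp hp q).symm
    by_cases hq : (q : G) ∈ center G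
    · exact mem_center_iff.mp hq p
    have hpx : Commute (p : G) x := mem_centralizer_singleton_iff.mp p.2
    have hxq : Commute x (q : G) := (mem_centralizer_singleton_iff.mp q.2).symm
    refine (hT.commute_rep_rep_iff p q).mp (hcomm ⟨_, hT.rep_mem_diff_center hp⟩
      ⟨_, hT.rep_mem_diff_center hx⟩ ⟨_, hT.rep_mem_diff_center hq⟩ ?_ ?_)
    exacts [(hT.commute_rep_rep_iff _ _).mpr hpx, (hT.commute_rep_rep_iff _ _).mpr hxq]

end TGraph

theorem stmt16 (G : Type*) [Group G] [Finite G] (hna : ∃ a b : G, a * b ≠ b * a)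
    (T : Set G) (hT : IsCenterTransversal G T) :
    ((∃ v k l m, IsSRG (TGraph G T) v k l m) ∧ ¬ (TGraph G T).Connected) ↔
      ((∀ x : G, x ∉ Subgroup.center G → IsMulCommutative (Subgroup.centralizer {x})) ∧
        ∃ r : ℕ, 3 ≤ r ∧ ∀ x : G, x ∉ Subgroup.center G →
          (Subgroup.center G).relIndex (Subgroup.centralizer {x}) = r) := by
  rw [forall_isMulCommutative_centralizer_iff_tGraph_adj_trans hT]
  constructor
  · rintro ⟨⟨v, k, l, m, hsrg⟩, hconn⟩
    refine ⟨hsrg.adj_trans_of_not_connected hconn, k + 2, by have := hsrg.2.1; omega,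
      fun x hx => ?_⟩
    rw [← hT.centralizer_rep x,
      ← ncard_neighborSet_tGraph_add_two hT ⟨_, hT.rep_mem_diff_center hx⟩, hsrg.2.2.2.1]
  · rintro ⟨htrans, r, hr, hrel⟩
    obtain ⟨a, b, hab⟩ := hna
    have ha : a ∉ center G := fun h => hab (mem_center_iff.mp h b).symm
    have hb : b ∉ center G := fun h => hab (mem_center_iff.mp h a)
    have hnc : ¬ Commute (hT.rep a) (hT.rep b) := fun h => hab ((hT.commute_rep_rep_iff a b).mp h)
    have hreg (v : ↥(T \ (center G : Set G))) : ((TGraph G T).neighborSet v).ncard = r - 2 := by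
      have := ncard_neighborSet_tGraph_add_two hT v
      rw [hrel v v.2.2] at this
      omega
    obtain ⟨hsrg, hconn⟩ := (TGraph G T).isSRG_and_not_connected_of_adj_trans htrans
      (by omega) hreg (p := ⟨_, hT.rep_mem_diff_center ha⟩) (q := ⟨_, hT.rep_mem_diff_center hb⟩)
      (fun h => hnc (by rw [show hT.rep a = hT.rep b from congrArg Subtype.val h])) (fun h => hnc h.2)
    exact ⟨⟨_, _, _, _, hsrg⟩, hconn⟩
end

section
/- Let G be a finite non-abelian group in which distinct elements of a common coset of Z(G) are adjacent in Γ(G) and have equal centralizers, with |Z(G)| > 1. If Γ(G) is strongly regular with parameters (v,k,λ,μ), then λ = k − 1 and μ = 0. -/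
open scoped commutatorElement

open Pointwise Subgroup

/-!
If `z ≠ 1` is central, then `x` and `x * z` commute with exactly the same elements, so every
non-central `x` has a neighbour `x * z` in `Γ(G)` whose other neighbours are exactly those of `x`.
Along such an edge the two endpoints share `k - 1` neighbours, whence `λ = k - 1`. Then adjacency
is transitive: a common neighbour `w` of `x` and `y` shares all its `k - 1` other neighbours with
`x`, `y` among them, so non-adjacent vertices have no common neighbour and `μ = 0`.
-/

namespace SimpleGraph

variable {V : Type*} {Γ : SimpleGraph V}

theorem neighborSet_inter_eq_sdiff {x y : V} (h : Γ.neighborSet x \ {y} ⊆ Γ.neighborSet y) :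
    Γ.neighborSet x ∩ Γ.neighborSet y = Γ.neighborSet x \ {y} := by
  refine Set.Subset.antisymm (fun w ⟨hxw, hyw⟩ => ⟨hxw, ?_⟩) fun w hw => ⟨hw.1, h hw⟩
  rintro rfl
  exact Γ.loopless.irrefl w hyw

theorem ncard_neighborSet_inter_eq_iff {x y : V} (hfin : (Γ.neighborSet x).Finite)
    (hxy : Γ.Adj x y) :
    (Γ.neighborSet x ∩ Γ.neighborSet y).ncard = (Γ.neighborSet x).ncard - 1 ↔
      Γ.neighborSet x \ {y} ⊆ Γ.neighborSet y := by
  rw [← Set.ncard_sdiff_singleton_of_mem ((Γ.mem_neighborSet x y).mpr hxy)]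
  refine ⟨fun h => ?_, fun h => by rw [neighborSet_inter_eq_sdiff h]⟩
  have hsub : Γ.neighborSet x ∩ Γ.neighborSet y ⊆ Γ.neighborSet x \ {y} := fun w ⟨hxw, hyw⟩ =>
    ⟨hxw, fun hwy => Γ.loopless.irrefl y (hwy ▸ hyw)⟩
  rw [← Set.eq_of_subset_of_ncard_le hsub h.ge (hfin.subset Set.sdiff_subset)]
  exact Set.inter_subset_right

end SimpleGraph

namespace IsSRG

variable {V : Type*} {Γ : SimpleGraph V} {v k l m : ℕ}

theorem finite (h : IsSRG Γ v k l m) : Finite V :=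
  Nat.finite_of_card_ne_zero (by rw [h.1]; have := h.2.2.1; omega)

theorem exists_ne_not_adj (h : IsSRG Γ v k l m) : ∃ x y, x ≠ y ∧ ¬ Γ.Adj x y := by
  have := h.finite
  obtain ⟨hv, -, hkv, hdeg, -⟩ := h
  obtain ⟨x⟩ : Nonempty V := (Nat.card_pos_iff.mp (by omega)).1
  have hlt : (insert x (Γ.neighborSet x)).ncard < (Set.univ : Set V).ncard := by
    rw [Set.ncard_univ, hv]
    exact (Set.ncard_insert_le _ _).trans_lt (by rw [hdeg]; exact hkv)
  obtain ⟨y, -, hy⟩ := Set.exists_mem_notMem_of_ncard_lt_ncard hlt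
  simp only [Set.mem_insert_iff, SimpleGraph.mem_neighborSet, not_or] at hy
  exact ⟨x, y, Ne.symm hy.1, hy.2⟩

theorem eq_pred_of_adj_of_twin (h : IsSRG Γ v k l m) {x y : V} (hxy : Γ.Adj x y)
    (htwin : Γ.neighborSet x \ {y} ⊆ Γ.neighborSet y) : l = k - 1 := by
  have := h.finite
  rw [← h.2.2.2.2.1 x y hxy, ← h.2.2.2.1 x]
  exact (SimpleGraph.ncard_neighborSet_inter_eq_iff (Set.toFinite _) hxy).mpr htwin

theorem eq_zero_of_eq_pred (h : IsSRG Γ v k (k - 1) m) : m = 0 := by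
  have := h.finite
  obtain ⟨x, y, hne, hxy⟩ := h.exists_ne_not_adj
  rw [← h.2.2.2.2.2 x y hne hxy, Set.ncard_eq_zero]
  refine Set.eq_empty_of_forall_notMem fun w ⟨hxw, hyw⟩ => hxy ?_
  have hwx : Γ.Adj w x := hxw.symm
  have htwin := (SimpleGraph.ncard_neighborSet_inter_eq_iff (Set.toFinite _) hwx).mp
    (by rw [h.2.2.2.2.1 w x hwx, h.2.2.2.1 w])
  exact htwin ⟨hyw.symm, hne.symm⟩

end IsSRG

section CommGraph

variable {G : Type*} [Group G]

theorem commute_mul_right_iff_of_mem_center {x z : G} (hz : z ∈ center G) (g : G) :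
    Commute (x * z) g ↔ Commute x g := by
  have hzg : Commute z g := (mem_center_iff.mp hz g).symm
  refine ⟨fun h => ?_, fun h => h.mul_left hzg⟩
  simpa using h.mul_left hzg.inv_left

variable {X : Set G}

theorem commGraph_adj_iff {x y : X} :
    (commGraph G X).Adj x y ↔ x ≠ y ∧ Commute (x : G) y := Iff.rfl

theorem commGraph_neighborSet_sdiff_subset_of_mul_mem_center {x y : X} {z : G}
    (hz : z ∈ center G) (hy : (y : G) = x * z) :
    (commGraph G X).neighborSet x \ {y} ⊆ (commGraph G X).neighborSet y := by
  rintro w ⟨hxw, hwy⟩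
  rw [SimpleGraph.mem_neighborSet, commGraph_adj_iff] at hxw ⊢
  exact ⟨Ne.symm hwy, hy ▸ (commute_mul_right_iff_of_mem_center hz w).mpr hxw.2⟩

theorem commGraph_adj_of_mul_mem_center {x y : X} {z : G} (hz : z ∈ center G) (hz1 : z ≠ 1)
    (hy : (y : G) = x * z) : (commGraph G X).Adj x y := by
  refine ⟨fun hxy => hz1 ?_, hy ▸ ((commute_mul_right_iff_of_mem_center hz _).mpr (.refl _)).symm⟩
  simpa [← hxy] using hy

end CommGraph

theorem stmt18_general (G : Type*) [Group G]
    (hZ : 1 < Nat.card (Subgroup.center G))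
    (v k l m : ℕ)
    (h : IsSRG (commGraph G ((Subgroup.center G : Set G))ᶜ) v k l m) :
    l = k - 1 ∧ m = 0 := by
  have : Finite (center G) := Nat.finite_of_card_ne_zero (by omega)
  have : Nontrivial (center G) := Finite.one_lt_card_iff_nontrivial.mp hZ
  obtain ⟨⟨z, hz⟩, hz1⟩ := exists_ne (1 : center G)
  have hz1 : z ≠ 1 := fun h => hz1 (Subtype.ext h)
  obtain ⟨x, -⟩ := h.exists_ne_not_adj
  let y : ↥((center G : Set G)ᶜ) :=
    ⟨x * z, fun hxz => x.2 ((Subgroup.mul_mem_cancel_right _ hz).mp hxz)⟩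
  have hl : l = k - 1 := h.eq_pred_of_adj_of_twin (commGraph_adj_of_mul_mem_center hz hz1 rfl)
    (commGraph_neighborSet_sdiff_subset_of_mul_mem_center (y := y) hz rfl)
  exact ⟨hl, (hl ▸ h).eq_zero_of_eq_pred⟩

theorem stmt18 (G : Type*) [Group G] [Finite G] (hna : ∃ a b : G, a * b ≠ b * a)
    (hcoset : ∀ x z₁ z₂ : G, z₁ ∈ Subgroup.center G → z₂ ∈ Subgroup.center G →
      (x * z₁) * (x * z₂) = (x * z₂) * (x * z₁) ∧
        Subgroup.centralizer {x * z₁} = Subgroup.centralizer {x * z₂})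
    (hZ : 1 < Nat.card (Subgroup.center G))
    (v k l m : ℕ)
    (h : IsSRG (commGraph G ((Subgroup.center G : Set G))ᶜ) v k l m) :
    l = k - 1 ∧ m = 0 :=
  stmt18_general G hZ v k l m h
end
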